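/- Let (U_j)_{j≥1} and (V_k)_{k≥1} be two independent sequences, each consisting of i.i.d. random elements, and let G be a bounded measurable real-valued function with E[G(U_1, V_1)] = 0. Then S_N = N^{-2} Σ_{j=1}^N Σ_{k=1}^N G(U_j, V_k) converges to 0 almost surely as N → ∞. -/

import Mathlib

/-!
Write `μ`, `ν` for the laws of `U 0`, `V 0` and decompose (Hoeffding)
`G (u, v) = R (u, v) + ∫ G (u, ·) ∂ν + ∫ G (·, v) ∂μ - ∫ G ∂(μ ⊗ ν)`,
where the remainder `R` integrates to zero in each variable separately. The averages of the two
one-variable parts converge by Etemadi's strong law for each sample. The summands `R (U j, V k)`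
are orthogonal in `L²`: two distinct index pairs differ in one coordinate, and integrating over
that independent variable first gives `0`. Hence the second moment of `N⁻² ∑ R (U j, V k)` is
`O(N⁻²)`, which is summable, so these averages tend to `0` almost surely.
-/

open MeasureTheory ProbabilityTheory Filter Finset Topology

section

variable {Ω α β γ : Type*} [MeasurableSpace Ω] [MeasurableSpace α] [MeasurableSpace β]
  [MeasurableSpace γ] {P : Measure Ω}

lemma Measurable.integrable_of_abs_le [IsFiniteMeasure P] {f : Ω → ℝ} (hf : Measurable f)
    {C : ℝ} (hC : ∀ ω, |f ω| ≤ C) : Integrable f P :=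
  .of_bound hf.aestronglyMeasurable C (ae_of_all _ hC)

lemma Measurable.memLp_of_abs_le [IsFiniteMeasure P] {f : Ω → ℝ} (hf : Measurable f)
    {C : ℝ} (hC : ∀ ω, |f ω| ≤ C) (p : ENNReal) : MemLp f p P :=
  .of_bound hf.aestronglyMeasurable C (ae_of_all _ hC)

lemma ae_tendsto_zero_of_summable_integral_sq {f : ℕ → Ω → ℝ}
    (hf : ∀ n, Integrable (fun ω => f n ω ^ 2) P)
    (hsum : Summable fun n => ∫ ω, f n ω ^ 2 ∂P) :
    ∀ᵐ ω ∂P, Tendsto (fun n => f n ω) atTop (𝓝 0) := by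
  have hsum_ne_top : ∑' n, eLpNorm (fun ω => f n ω ^ 2) 1 P ≠ ⊤ := by
    simp_rw [eLpNorm_one_eq_lintegral_enorm, ← ofReal_integral_norm_eq_lintegral_enorm (hf _),
      Real.norm_eq_abs, abs_sq]
    rw [← ENNReal.ofReal_tsum_of_nonneg (fun n => integral_nonneg fun ω => sq_nonneg _) hsum]
    exact ENNReal.ofReal_ne_top
  filter_upwards [summable_norm_of_tsum_eLpNorm_ne_top le_rfl
    (fun n => (hf n).aestronglyMeasurable) hsum_ne_top] with ω hω
  have hsq : Tendsto (fun n => f n ω ^ 2) atTop (𝓝 0) := by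
    simpa [Real.norm_eq_abs, abs_sq] using hω.tendsto_atTop_zero
  rw [tendsto_zero_iff_abs_tendsto_zero]
  simpa [Function.comp_def, Real.sqrt_sq_eq_abs] using hsq.sqrt

lemma integral_sq_sum_eq_of_orthogonal {ι : Type*} (s : Finset ι) {a : ι → Ω → ℝ}
    (ha : ∀ i, MemLp (a i) 2 P)
    (horth : ∀ i ∈ s, ∀ j ∈ s, i ≠ j → ∫ ω, a i ω * a j ω ∂P = 0) :
    ∫ ω, (∑ i ∈ s, a i ω) ^ 2 ∂P = ∑ i ∈ s, ∫ ω, a i ω ^ 2 ∂P := by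
  have hint : ∀ i j, Integrable (fun ω => a i ω * a j ω) P := fun i j =>
    (ha i).integrable_mul (ha j)
  simp_rw [sq, sum_mul_sum]
  rw [integral_finsetSum _ fun i _ => integrable_finsetSum _ fun j _ => hint i j]
  refine sum_congr rfl fun i hi => ?_
  rw [integral_finsetSum _ fun j _ => hint i j]
  exact sum_eq_single_of_mem i hi fun j hj hji => horth i hi j hj hji.symm

lemma ae_tendsto_average_comp {U : ℕ → Ω → α} (hUmeas : ∀ j, Measurable (U j))
    (hU : Pairwise fun i j => IndepFun (U i) (U j) P)
    (hUid : ∀ j, P.map (U j) = P.map (U 0)) {g : α → ℝ} (hg : Measurable g)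
    (hgint : Integrable g (P.map (U 0))) :
    ∀ᵐ ω ∂P, Tendsto (fun n : ℕ => (n : ℝ)⁻¹ * ∑ j ∈ range n, g (U j ω)) atTop
      (𝓝 (∫ x, g x ∂(P.map (U 0)))) := by
  have hident (j : ℕ) : IdentDistrib (g ∘ U j) (g ∘ U 0) P P :=
    (IdentDistrib.mk (hUmeas j).aemeasurable (hUmeas 0).aemeasurable (hUid j)).comp hg
  rw [integral_map (hUmeas 0).aemeasurable hg.aestronglyMeasurable]
  exact strong_law_ae (fun j => g ∘ U j) (hgint.comp_measurable (hUmeas 0))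
    (fun i j hij => (hU hij).comp hg hg) hident

lemma integral_mul_eq_zero_of_indepFun [IsFiniteMeasure P] {X : Ω → γ} {Y₁ Y₂ : Ω → β}
    (hX : Measurable X) (hY₁ : Measurable Y₁) (hY₂ : Measurable Y₂)
    (hXY : IndepFun X (fun ω => (Y₁ ω, Y₂ ω)) P) (hY : IndepFun Y₁ Y₂ P)
    {f g : γ × β → ℝ} (hf : Measurable f) (hg : Measurable g) {C D : ℝ}
    (hfC : ∀ z, |f z| ≤ C) (hgD : ∀ z, |g z| ≤ D) (hf₀ : ∀ x, ∫ y, f (x, y) ∂(P.map Y₁) = 0) :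
    ∫ ω, f (X ω, Y₁ ω) * g (X ω, Y₂ ω) ∂P = 0 := by
  set F : γ × β × β → ℝ := fun z => f (z.1, z.2.1) * g (z.1, z.2.2)
  have hlaw : P.map (fun ω => (X ω, Y₁ ω, Y₂ ω)) = (P.map X).prod ((P.map Y₁).prod (P.map Y₂)) := by
    rw [(indepFun_iff_map_prod_eq_prod_map_map hX.aemeasurable
        (hY₁.prodMk hY₂).aemeasurable).mp hXY,
      (indepFun_iff_map_prod_eq_prod_map_map hY₁.aemeasurable hY₂.aemeasurable).mp hY]
  have hFm : Measurable F := by fun_prop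
  have hFint : Integrable F ((P.map X).prod ((P.map Y₁).prod (P.map Y₂))) :=
    hFm.integrable_of_abs_le fun z => by
      rw [abs_mul]
      exact mul_le_mul (hfC _) (hgD _) (abs_nonneg _) ((abs_nonneg _).trans (hfC (z.1, z.2.1)))
  calc ∫ ω, f (X ω, Y₁ ω) * g (X ω, Y₂ ω) ∂P
      = ∫ z, F z ∂((P.map X).prod ((P.map Y₁).prod (P.map Y₂))) := by
        rw [← hlaw, integral_map (by fun_prop) hFm.aestronglyMeasurable]
    _ = ∫ x, (∫ y, f (x, y) ∂(P.map Y₁)) * ∫ y, g (x, y) ∂(P.map Y₂) ∂(P.map X) := by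
        rw [integral_prod _ hFint]
        exact integral_congr_ae (ae_of_all _ fun x =>
          integral_prod_mul (fun y => f (x, y)) (fun y => g (x, y)))
    _ = 0 := by simp [hf₀]

lemma abs_integral_le_of_abs_le {μ : Measure α} [IsProbabilityMeasure μ] {f : α → ℝ} {C : ℝ}
    (hC : ∀ x, |f x| ≤ C) : |∫ x, f x ∂μ| ≤ C := by
  simpa using norm_integral_le_of_norm_le_const (μ := μ) (f := f) (ae_of_all _ hC)

section Hoeffding

variable (μ : Measure α) (ν : Measure β)

noncomputable def hoeffdingRemainder (G : α × β → ℝ) (x : α × β) : ℝ :=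
  G x - ∫ v, G (x.1, v) ∂ν - ∫ u, G (u, x.2) ∂μ + ∫ z, G z ∂(μ.prod ν)

variable {μ ν} {G : α × β → ℝ}

lemma hoeffdingRemainder_add_projections (x : α × β) :
    hoeffdingRemainder μ ν G x + ∫ v, G (x.1, v) ∂ν + ∫ u, G (u, x.2) ∂μ
      - ∫ z, G z ∂(μ.prod ν) = G x := by
  unfold hoeffdingRemainder
  ring

lemma measurable_hoeffdingRemainder [SFinite μ] [SFinite ν] (hG : Measurable G) :
    Measurable (hoeffdingRemainder μ ν G) :=
  ((hG.sub (hG.stronglyMeasurable.integral_prod_right'.measurable.comp measurable_fst)).sub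
    (hG.stronglyMeasurable.integral_prod_left'.measurable.comp measurable_snd)).add_const _

variable [IsProbabilityMeasure μ] [IsProbabilityMeasure ν]

lemma abs_hoeffdingRemainder_le {C : ℝ} (hC : ∀ x, |G x| ≤ C) (x : α × β) :
    |hoeffdingRemainder μ ν G x| ≤ 4 * C := by
  have h₁ := abs_integral_le_of_abs_le (μ := ν) fun v => hC (x.1, v)
  have h₂ := abs_integral_le_of_abs_le (μ := μ) fun u => hC (u, x.2)
  have h₃ := abs_integral_le_of_abs_le (μ := μ.prod ν) hC
  unfold hoeffdingRemainder
  linarith [hC x, abs_add_le (G x - ∫ v, G (x.1, v) ∂ν - ∫ u, G (u, x.2) ∂μ) (∫ z, G z ∂(μ.prod ν)),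
    abs_sub (G x - ∫ v, G (x.1, v) ∂ν) (∫ u, G (u, x.2) ∂μ), abs_sub (G x) (∫ v, G (x.1, v) ∂ν)]

lemma integral_hoeffdingRemainder_left (hG : Measurable G) {C : ℝ} (hC : ∀ x, |G x| ≤ C)
    (v : β) : ∫ u, hoeffdingRemainder μ ν G (u, v) ∂μ = 0 := by
  have hrow : Integrable (fun u => ∫ v, G (u, v) ∂ν) μ :=
    hG.stronglyMeasurable.integral_prod_right'.measurable.integrable_of_abs_le
      fun u => abs_integral_le_of_abs_le fun v => hC (u, v)
  have hslice : Integrable (fun u => G (u, v)) μ :=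
    (hG.comp measurable_prodMk_right).integrable_of_abs_le fun u => hC (u, v)
  unfold hoeffdingRemainder
  rw [integral_add (f := fun u => G (u, v) - ∫ v, G (u, v) ∂ν - ∫ u, G (u, v) ∂μ)
      ((hslice.sub hrow).sub (integrable_const _)) (integrable_const _),
    integral_sub (f := fun u => G (u, v) - ∫ v, G (u, v) ∂ν) (hslice.sub hrow)
      (integrable_const _),
    integral_sub hslice hrow, ← integral_prod _ (hG.integrable_of_abs_le hC)]
  simp

lemma integral_hoeffdingRemainder_right (hG : Measurable G) {C : ℝ} (hC : ∀ x, |G x| ≤ C)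
    (u : α) : ∫ v, hoeffdingRemainder μ ν G (u, v) ∂ν = 0 := by
  have hcol : Integrable (fun v => ∫ u, G (u, v) ∂μ) ν :=
    hG.stronglyMeasurable.integral_prod_left'.measurable.integrable_of_abs_le
      fun v => abs_integral_le_of_abs_le fun u => hC (u, v)
  have hslice : Integrable (fun v => G (u, v)) ν :=
    (hG.comp measurable_prodMk_left).integrable_of_abs_le fun v => hC (u, v)
  unfold hoeffdingRemainder
  rw [integral_add (f := fun v => G (u, v) - ∫ v, G (u, v) ∂ν - ∫ u, G (u, v) ∂μ)
      ((hslice.sub (integrable_const _)).sub hcol) (integrable_const _),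
    integral_sub (f := fun v => G (u, v) - ∫ v, G (u, v) ∂ν)
      (hslice.sub (integrable_const _)) hcol,
    integral_sub hslice (integrable_const _), ← integral_prod_symm _ (hG.integrable_of_abs_le hC)]
  simp

end Hoeffding

structure IndepSamples (P : Measure Ω) (U : ℕ → Ω → α) (V : ℕ → Ω → β) : Prop where
  measurable_left : ∀ j, Measurable (U j)
  measurable_right : ∀ k, Measurable (V k)
  indepFun_left : Pairwise fun i j => IndepFun (U i) (U j) P
  indepFun_right : Pairwise fun i j => IndepFun (V i) (V j) P
  map_left : ∀ j, P.map (U j) = P.map (U 0)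
  map_right : ∀ k, P.map (V k) = P.map (V 0)
  indepFun_left_right : IndepFun (fun ω j => U j ω) (fun ω k => V k ω) P

section DegenerateKernel

variable [IsProbabilityMeasure P] {U : ℕ → Ω → α} {V : ℕ → Ω → β} {h : α × β → ℝ} {C : ℝ}

lemma IndepSamples.integral_mul_eq_zero (hS : IndepSamples P U V)
    (hh : Measurable h) (hC : ∀ x, |h x| ≤ C)
    (hleft : ∀ v, ∫ u, h (u, v) ∂(P.map (U 0)) = 0)
    (hright : ∀ u, ∫ v, h (u, v) ∂(P.map (V 0)) = 0)
    {p q : ℕ × ℕ} (hpq : p ≠ q) :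
    ∫ ω, h (U p.1 ω, V p.2 ω) * h (U q.1 ω, V q.2 ω) ∂P = 0 := by
  rcases eq_or_ne p.2 q.2 with hk | hk
  · have hj : p.1 ≠ q.1 := fun hj => hpq (Prod.ext hj hk)
    exact integral_mul_eq_zero_of_indepFun (X := fun ω => (V p.2 ω, V q.2 ω))
      (f := fun z => h (z.2, z.1.1)) (g := fun z => h (z.2, z.1.2))
      ((hS.measurable_right _).prodMk (hS.measurable_right _))
      (hS.measurable_left _) (hS.measurable_left _)
      (hS.indepFun_left_right.symm.comp
        ((measurable_pi_apply p.2).prodMk (measurable_pi_apply q.2))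
        ((measurable_pi_apply p.1).prodMk (measurable_pi_apply q.1)))
      (hS.indepFun_left hj) (by fun_prop) (by fun_prop) (fun _ => hC _) (fun _ => hC _)
      fun x => by rw [hS.map_left]; exact hleft x.1
  · exact integral_mul_eq_zero_of_indepFun (X := fun ω => (U p.1 ω, U q.1 ω))
      (f := fun z => h (z.1.1, z.2)) (g := fun z => h (z.1.2, z.2))
      ((hS.measurable_left _).prodMk (hS.measurable_left _))
      (hS.measurable_right _) (hS.measurable_right _)
      (hS.indepFun_left_right.comp
        ((measurable_pi_apply p.1).prodMk (measurable_pi_apply q.1))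
        ((measurable_pi_apply p.2).prodMk (measurable_pi_apply q.2)))
      (hS.indepFun_right hk) (by fun_prop) (by fun_prop) (fun _ => hC _) (fun _ => hC _)
      fun x => by rw [hS.map_right]; exact hright x.1

lemma IndepSamples.memLp_comp (hS : IndepSamples P U V) (hh : Measurable h)
    (hC : ∀ x, |h x| ≤ C) (p : ℕ × ℕ) : MemLp (fun ω => h (U p.1 ω, V p.2 ω)) 2 P :=
  (hh.comp ((hS.measurable_left _).prodMk (hS.measurable_right _))).memLp_of_abs_le
    (fun _ => hC _) 2

lemma IndepSamples.integral_sq_double_average_le (hS : IndepSamples P U V)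
    (hh : Measurable h) (hC : ∀ x, |h x| ≤ C)
    (hleft : ∀ v, ∫ u, h (u, v) ∂(P.map (U 0)) = 0)
    (hright : ∀ u, ∫ v, h (u, v) ∂(P.map (V 0)) = 0) (N : ℕ) :
    ∫ ω, (((N : ℝ) ^ 2)⁻¹ * ∑ j ∈ range N, ∑ k ∈ range N, h (U j ω, V k ω)) ^ 2 ∂P
      ≤ C ^ 2 * ((N : ℝ) ^ 2)⁻¹ := by
  have hsq (p : ℕ × ℕ) : ∫ ω, h (U p.1 ω, V p.2 ω) ^ 2 ∂P ≤ C ^ 2 := by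
    refine (integral_mono (hS.memLp_comp hh hC p).integrable_sq (integrable_const (C ^ 2))
      fun ω => ?_).trans_eq (by simp)
    rw [← sq_abs]
    exact pow_le_pow_left₀ (abs_nonneg _) (hC _) 2
  simp_rw [mul_pow, ← sum_product' (range N) (range N) fun j k => h (U j _, V k _)]
  rw [integral_const_mul, integral_sq_sum_eq_of_orthogonal _ (hS.memLp_comp hh hC)
    fun p _ q _ hpq => hS.integral_mul_eq_zero hh hC hleft hright hpq]
  calc (((N : ℝ) ^ 2)⁻¹) ^ 2 * ∑ p ∈ range N ×ˢ range N, ∫ ω, h (U p.1 ω, V p.2 ω) ^ 2 ∂P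
      ≤ (((N : ℝ) ^ 2)⁻¹) ^ 2 * ∑ _p ∈ range N ×ˢ range N, C ^ 2 := by
        gcongr with p; exact hsq p
    _ = C ^ 2 * ((N : ℝ) ^ 2)⁻¹ := by
        rcases eq_or_ne N 0 with rfl | hN
        · simp
        · simp only [inv_pow, sum_const, card_product, card_range, nsmul_eq_mul, Nat.cast_mul]
          field_simp

lemma IndepSamples.ae_tendsto_double_average_of_degenerate (hS : IndepSamples P U V)
    (hh : Measurable h) (hC : ∀ x, |h x| ≤ C)
    (hleft : ∀ v, ∫ u, h (u, v) ∂(P.map (U 0)) = 0)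
    (hright : ∀ u, ∫ v, h (u, v) ∂(P.map (V 0)) = 0) :
    ∀ᵐ ω ∂P, Tendsto (fun N : ℕ => ((N : ℝ) ^ 2)⁻¹ *
      ∑ j ∈ range N, ∑ k ∈ range N, h (U j ω, V k ω)) atTop (𝓝 0) := by
  refine ae_tendsto_zero_of_summable_integral_sq (fun N => ?_) ?_
  · have hsum : MemLp (fun ω => ∑ j ∈ range N, ∑ k ∈ range N, h (U j ω, V k ω)) 2 P :=
      memLp_finsetSum _ fun j _ => memLp_finsetSum _ fun k _ => hS.memLp_comp hh hC (j, k)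
    exact (hsum.const_mul _).integrable_sq
  · exact .of_nonneg_of_le (fun N => integral_nonneg fun ω => sq_nonneg _)
      (hS.integral_sq_double_average_le hh hC hleft hright)
      ((Real.summable_nat_pow_inv.mpr one_lt_two).mul_left _)

end DegenerateKernel

lemma double_average_add_add_sub {N : ℕ} (hN : N ≠ 0) (r : ℕ → ℕ → ℝ) (a b : ℕ → ℝ) (c : ℝ) :
    ((N : ℝ) ^ 2)⁻¹ * ∑ j ∈ range N, ∑ k ∈ range N, (r j k + a j + b k - c)
      = ((N : ℝ) ^ 2)⁻¹ * ∑ j ∈ range N, ∑ k ∈ range N, r j k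
        + (N : ℝ)⁻¹ * ∑ j ∈ range N, a j + (N : ℝ)⁻¹ * ∑ k ∈ range N, b k - c := by
  simp only [sum_sub_distrib, sum_add_distrib, sum_const, card_range, nsmul_eq_mul,
    ← mul_sum]
  field_simp

theorem IndepSamples.ae_tendsto_double_average [IsProbabilityMeasure P] {U : ℕ → Ω → α}
    {V : ℕ → Ω → β} (hS : IndepSamples P U V) {G : α × β → ℝ} (hG : Measurable G) {C : ℝ}
    (hC : ∀ x, |G x| ≤ C) :
    ∀ᵐ ω ∂P, Tendsto (fun N : ℕ => ((N : ℝ) ^ 2)⁻¹ *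
      ∑ j ∈ range N, ∑ k ∈ range N, G (U j ω, V k ω)) atTop
      (𝓝 (∫ z, G z ∂((P.map (U 0)).prod (P.map (V 0))))) := by
  set μ := P.map (U 0)
  set ν := P.map (V 0)
  have : IsProbabilityMeasure μ :=
    Measure.isProbabilityMeasure_map (hS.measurable_left 0).aemeasurable
  have : IsProbabilityMeasure ν :=
    Measure.isProbabilityMeasure_map (hS.measurable_right 0).aemeasurable
  have hGint : Integrable G (μ.prod ν) := hG.integrable_of_abs_le hC
  have hdeg := hS.ae_tendsto_double_average_of_degenerate (measurable_hoeffdingRemainder hG)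
    (abs_hoeffdingRemainder_le hC) (integral_hoeffdingRemainder_left hG hC)
    (integral_hoeffdingRemainder_right hG hC)
  have hrow := ae_tendsto_average_comp hS.measurable_left hS.indepFun_left hS.map_left
    hG.stronglyMeasurable.integral_prod_right'.measurable
    (hG.stronglyMeasurable.integral_prod_right'.measurable.integrable_of_abs_le
      fun u => abs_integral_le_of_abs_le (μ := ν) fun v => hC (u, v))
  have hcol := ae_tendsto_average_comp hS.measurable_right hS.indepFun_right hS.map_right
    hG.stronglyMeasurable.integral_prod_left'.measurable
    (hG.stronglyMeasurable.integral_prod_left'.measurable.integrable_of_abs_le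
      fun v => abs_integral_le_of_abs_le (μ := μ) fun u => hC (u, v))
  rw [← integral_prod _ hGint] at hrow
  rw [← integral_prod_symm _ hGint] at hcol
  filter_upwards [hdeg, hrow, hcol] with ω hdegω hrowω hcolω
  have hlim := ((hdegω.add hrowω).add hcolω).sub_const (∫ z, G z ∂(μ.prod ν))
  rw [zero_add, add_sub_cancel_right] at hlim
  refine hlim.congr' ((eventually_ne_atTop 0).mono fun N hN => ?_)
  rw [← double_average_add_add_sub hN]
  exact congrArg _ (sum_congr rfl fun j _ => sum_congr rfl fun k _ =>
    hoeffdingRemainder_add_projections _)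

end

theorem two_index_strong_law
    {Ω α β : Type*} [MeasurableSpace Ω] [MeasurableSpace α] [MeasurableSpace β]
    (P : Measure Ω) [IsProbabilityMeasure P]
    (U : ℕ → Ω → α) (V : ℕ → Ω → β)
    (hUmeas : ∀ j, Measurable (U j)) (hVmeas : ∀ k, Measurable (V k))
    (hUindep : iIndepFun U P)
    (hVindep : iIndepFun V P)
    (hUid : ∀ j, Measure.map (U j) P = Measure.map (U 0) P)
    (hVid : ∀ k, Measure.map (V k) P = Measure.map (V 0) P)
    (hUV : IndepFun (fun ω j => U j ω) (fun ω k => V k ω) P)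
    (G : α × β → ℝ) (hGmeas : Measurable G) (C : ℝ) (hGbdd : ∀ x, |G x| ≤ C)
    (hGcentered : ∫ ω, G (U 0 ω, V 0 ω) ∂P = 0) :
    ∀ᵐ ω ∂P, Tendsto
      (fun N : ℕ => ((N : ℝ) ^ 2)⁻¹ *
        ∑ j ∈ Finset.range N, ∑ k ∈ Finset.range N, G (U j ω, V k ω))
      atTop (nhds 0) := by
  have hS : IndepSamples P U V :=
    ⟨hUmeas, hVmeas, fun _ _ => hUindep.indepFun, fun _ _ => hVindep.indepFun, hUid, hVid, hUV⟩
  have hmean : ∫ z, G z ∂((P.map (U 0)).prod (P.map (V 0))) = 0 := by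
    rw [← (indepFun_iff_map_prod_eq_prod_map_map (hUmeas 0).aemeasurable
        (hVmeas 0).aemeasurable).mp (hUV.comp (measurable_pi_apply 0) (measurable_pi_apply 0)),
      integral_map (by fun_prop) hGmeas.aestronglyMeasurable]
    exact hGcentered
  simpa only [hmean] using hS.ae_tendsto_double_average hGmeas hGbdd
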